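/- Let w be a (u,v)-walk with no unbalanced vertex term in a signed graph, and let w₁, w₂ be (v,u)-walks such that w + w₁ and w + w₂ are both even closed walks. Then w₁ + w₂⁻¹ is an even closed walk and its associated binomial B_{w₁ + w₂⁻¹} lies in the ideal generated by B_{w + w₁} and B_{w + w₂} in the polynomial ring K[e : e ∈ E(G)]. -/

import Mathlib

variable {V : Type*}

/-- The product of τ(e,u)·τ(e,v) over all edge terms e = uv of a walk in a signed
graph (G,τ), where the sign τ assigns a unit ±1 to each incidence. -/
def walkSign (G : SimpleGraph V) (τ : Sym2 V → V → ℤˣ) :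
    {u v : V} → G.Walk u v → ℤˣ
  | _, _, SimpleGraph.Walk.nil => 1
  | _, _, @SimpleGraph.Walk.cons _ _ a b _ _ p =>
      τ s(a, b) a * τ s(a, b) b * walkSign G τ p

/-- μ of a closed walk: (-1)^(number of unbalanced vertex terms). -/
def mu (G : SimpleGraph V) (τ : Sym2 V → V → ℤˣ) {u v : V} (w : G.Walk u v) : ℤˣ :=
  (-1) ^ w.length * walkSign G τ w

/-- The i-th dart (oriented edge term) of a walk. -/
def dartAt {G : SimpleGraph V} {u v : V} (w : G.Walk u v) (i : Fin w.length) :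
    G.Dart :=
  w.darts.get (Fin.cast w.length_darts.symm i)

/-- Cyclic successor on `Fin n`. -/
def csucc {n : ℕ} (i : Fin n) : Fin n := ⟨(i + 1) % n, Nat.mod_lt _ i.pos⟩

/-- `FlipRel G τ w κ`: κ assigns a sign ±1 to each edge term of the closed walk w,
flipping exactly at the unbalanced vertex terms (cyclically).  Such a κ records (up
to a global sign) the parity of the balanced section containing each edge term in the
balanced section-decomposition of w, and a κ satisfying this relation exists iff w is
even. -/
def FlipRel (G : SimpleGraph V) (τ : Sym2 V → V → ℤˣ) {v : V} (w : G.Walk v v)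
    (κ : Fin w.length → ℤˣ) : Prop :=
  ∀ i : Fin w.length,
    κ (csucc i) =
      -(τ (dartAt w i).edge (dartAt w i).toProd.2 *
          τ (dartAt w (csucc i)).edge (dartAt w i).toProd.2) * κ i

open MvPolynomial in
/-- The positive monomial B_w⁺ of the binomial associated with an even closed walk w,
relative to the section-parity assignment κ: the product of all edge terms lying in
the sections with κ = 1. -/
noncomputable def Bpos (K : Type*) [Field K] {G : SimpleGraph V} {v : V}
    (w : G.Walk v v) (κ : Fin w.length → ℤˣ) : MvPolynomial G.edgeSet K :=
  ∏ i ∈ Finset.univ.filter (fun i => κ i = 1),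
    X (⟨(dartAt w i).edge, (dartAt w i).edge_mem⟩ : G.edgeSet)

open MvPolynomial in
/-- The negative monomial B_w⁻: the product of all edge terms in sections with κ = -1. -/
noncomputable def Bneg (K : Type*) [Field K] {G : SimpleGraph V} {v : V}
    (w : G.Walk v v) (κ : Fin w.length → ℤˣ) : MvPolynomial G.edgeSet K :=
  ∏ i ∈ Finset.univ.filter (fun i => κ i = -1),
    X (⟨(dartAt w i).edge, (dartAt w i).edge_mem⟩ : G.edgeSet)

open MvPolynomial in
/-- The toric ideal I_{(G,τ)} of a signed graph: the ideal of K[e : e ∈ E(G)]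
generated by the binomials e^{b⁺} - e^{b⁻} over integer vectors b in the kernel of
the incidence matrix A(G,τ). -/
noncomputable def toricIdeal (K : Type*) [Field K] [DecidableEq V]
    (G : SimpleGraph V) [Fintype G.edgeSet] (τ : Sym2 V → V → ℤˣ) :
    Ideal (MvPolynomial G.edgeSet K) :=
  Ideal.span { f | ∃ b : G.edgeSet → ℤ,
    (∀ v : V, ∑ e : G.edgeSet,
      (if v ∈ (e : Sym2 V) then (τ e v : ℤ) else 0) * b e = 0) ∧
    f = (∏ e : G.edgeSet, X e ^ (b e).toNat)
      - ∏ e : G.edgeSet, X e ^ (-(b e)).toNat }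

/-!
Split the darts as `w + w₁ = D E₁`, `w + w₂ = D E₂` and `w₁ + w₂⁻¹ = E₁ E₂⁻¹`, where `D` is the
list of darts of `w`. Along any run of edge terms a `FlipRel` assignment is determined by its
first value, so the three assignments agree on `E₁`, `E₂` up to global signs, and they are
constant on `D` since `w` is balanced. Normalise them to `+1` on `D` and let `W` be the product of
the edges of `D` and `Pᵢ`, `Nᵢ` the products of the edges of `Eᵢ` with sign `+1`, `-1`. Then the
binomials of `w + w₁`, `w + w₂` are `±(W P₁ - N₁)`, `±(W P₂ - N₂)`, and since the transitions at
`u` of the three closed walks multiply to `-1`, the binomial of `w₁ + w₂⁻¹` is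
`±(P₁ N₂ - N₁ P₂) = ±(P₂ (W P₁ - N₁) - P₁ (W P₂ - N₂))`.
Evenness is the parity count: `μ` is multiplicative under concatenation and invariant under
reversal, so `μ (w₁ + w₂⁻¹) = μ (w + w₁) μ (w + w₂)`.
-/

section Parity

variable {G : SimpleGraph V} {τ : Sym2 V → V → ℤˣ}

theorem walkSign_append {x y z : V} (p : G.Walk x y) (q : G.Walk y z) :
    walkSign G τ (p.append q) = walkSign G τ p * walkSign G τ q := by
  induction p with
  | nil => simp [walkSign]
  | cons h p ih => simp [walkSign, ih, mul_assoc]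

theorem walkSign_reverse {x y : V} (p : G.Walk x y) :
    walkSign G τ p.reverse = walkSign G τ p := by
  induction p with
  | nil => rfl
  | @cons a b _ h p ih =>
    rw [SimpleGraph.Walk.reverse_cons, walkSign_append, ih]
    simp [walkSign, Sym2.eq_swap (a := a) (b := b), mul_comm]

theorem mu_append {x y z : V} (p : G.Walk x y) (q : G.Walk y z) :
    mu G τ (p.append q) = mu G τ p * mu G τ q := by
  simp only [mu, walkSign_append, SimpleGraph.Walk.length_append, pow_add]
  exact mul_mul_mul_comm _ _ _ _

theorem mu_reverse {x y : V} (p : G.Walk x y) : mu G τ p.reverse = mu G τ p := by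
  simp [mu, walkSign_reverse]

theorem mu_append_reverse {u v : V} (w : G.Walk u v) (w₁ w₂ : G.Walk v u) :
    mu G τ (w₁.append w₂.reverse) = mu G τ (w.append w₁) * mu G τ (w.append w₂) := by
  rw [mu_append, mu_append, mu_append, mu_reverse, mul_mul_mul_comm, Int.units_mul_self,
    one_mul]

end Parity

section Chains

variable {α : Type*} {R : α → α → Prop}

theorem List.isChain_ofFn_append_take_one_iff {n : ℕ} (f : Fin n → α) :
    (List.ofFn f ++ (List.ofFn f).take 1).IsChain R ↔ ∀ i, R (f i) (f (csucc i)) := by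
  rcases n with _ | n
  · simp
  have hlen : (List.ofFn f ++ (List.ofFn f).take 1).length = n + 2 := by simp
  have hget : ∀ (i : ℕ) (hi : i < n + 2), (List.ofFn f ++ (List.ofFn f).take 1)[i]'(hlen ▸ hi)
      = f ⟨i % (n + 1), Nat.mod_lt _ n.succ_pos⟩ := by
    intro i hi
    rw [List.getElem_append]
    split_ifs with h
    · rw [List.getElem_ofFn]
      simp only [List.length_ofFn] at h
      simp only [Nat.mod_eq_of_lt h]
    · simp only [List.length_ofFn] at h
      simp [show i = n + 1 by omega]
  rw [List.isChain_iff_getElem]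
  constructor
  · intro h i
    have := h i (by rw [hlen]; omega)
    rw [hget _ (by omega), hget _ (by omega)] at this
    convert this using 2
    exacts [Fin.ext (Nat.mod_eq_of_lt i.isLt).symm, rfl]
  · intro h i hi
    rw [hlen] at hi
    rw [hget _ (by omega), hget _ (by omega)]
    convert h ⟨i, by omega⟩ using 2
    exacts [Fin.ext (Nat.mod_eq_of_lt (by omega)), rfl]

theorem List.IsChain.append_comm_of_cyclic {l₁ l₂ : List α}
    (h : (l₁ ++ l₂ ++ (l₁ ++ l₂).take 1).IsChain R) : (l₂ ++ l₁).IsChain R := by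
  rcases l₁ with _ | ⟨a, l₁⟩
  · simpa using h.infix (List.prefix_append _ _).isInfix
  have h₁ : (l₂ ++ [a]).IsChain R := h.infix ⟨a :: l₁, [], by simp⟩
  have h₂ : ([a] ++ l₁).IsChain R := h.infix ⟨[], l₂ ++ [a], by simp⟩
  simpa using h₁.append_overlap h₂ (List.cons_ne_nil a [])

end Chains

section SignedLists

variable {α : Type*}

def SignStep (t : α → α → ℤˣ) (p q : α × ℤˣ) : Prop := q.2 = t p.1 q.1 * p.2

def rescale (ε : ℤˣ) (p : α × ℤˣ) : α × ℤˣ := (p.1, ε * p.2)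

def withSign (s : ℤˣ) (l : List α) : List (α × ℤˣ) := l.map (·, s)

@[simp] theorem rescale_fst (ε : ℤˣ) (p : α × ℤˣ) : (rescale ε p).1 = p.1 := rfl

@[simp] theorem rescale_snd (ε : ℤˣ) (p : α × ℤˣ) : (rescale ε p).2 = ε * p.2 := rfl

@[simp] theorem map_rescale_one (L : List (α × ℤˣ)) : L.map (rescale 1) = L :=
  List.map_id'' (fun _ => by simp [rescale]) L

@[simp] theorem rescale_comp_rescale (ε ε' : ℤˣ) :
    rescale ε ∘ rescale ε' = (rescale (ε * ε') : α × ℤˣ → α × ℤˣ) := by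
  funext p
  simp [rescale, mul_assoc]

@[simp] theorem map_fst_withSign (s : ℤˣ) (l : List α) : (withSign s l).map Prod.fst = l := by
  simp [withSign, Function.comp_def]

@[simp] theorem withSign_map_rescale (ε s : ℤˣ) (l : List α) :
    (withSign s l).map (rescale ε) = withSign (ε * s) l := by
  simp [withSign, rescale, Function.comp_def]

theorem isChain_withSign {t : α → α → ℤˣ} {l : List α} (hl : l.IsChain fun a b => t a b = 1)
    (s : ℤˣ) : (withSign s l).IsChain (SignStep t) := by
  rw [withSign, List.isChain_map]
  exact hl.imp fun a b h => by simp [SignStep, h]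

theorem cons_eq_map_rescale_of_isChain {t : α → α → ℤˣ} {ε : ℤˣ} {p p' : α × ℤˣ}
    {L L' : List (α × ℤˣ)} (h : (p :: L).IsChain (SignStep t))
    (h' : (p' :: L').IsChain (SignStep t)) (hfst : L'.map Prod.fst = L.map Prod.fst)
    (hp : p' = rescale ε p) : p' :: L' = (p :: L).map (rescale ε) := by
  induction L generalizing p p' L' with
  | nil => simp_all
  | cons q L ih =>
    obtain ⟨q', L', rfl, hq, hL⟩ := List.map_eq_cons_iff.mp hfst
    simp only [List.isChain_cons_cons, SignStep] at h h'
    have hq' : q' = rescale ε q := by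
      refine Prod.ext hq ?_
      rw [h'.1, rescale_snd, h.1, hp, hq, rescale_snd, rescale_fst, mul_left_comm]
    rw [ih h.2 h'.2 hL hq', hp]
    rfl

theorem exists_eq_map_rescale_of_isChain {t : α → α → ℤˣ} {L L' : List (α × ℤˣ)}
    (h : L.IsChain (SignStep t)) (h' : L'.IsChain (SignStep t))
    (hfst : L'.map Prod.fst = L.map Prod.fst) : ∃ ε, L' = L.map (rescale ε) := by
  rcases L with _ | ⟨p, L⟩
  · exact ⟨1, by simpa using hfst⟩
  obtain ⟨p', L', rfl, hp, hL⟩ := List.map_eq_cons_iff.mp hfst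
  refine ⟨p'.2 * p.2, cons_eq_map_rescale_of_isChain h h' hL (Prod.ext hp ?_)⟩
  rw [rescale_snd, mul_assoc, Int.units_mul_self, mul_one]

end SignedLists

section SignedDarts

open SimpleGraph

variable {G : SimpleGraph V} (τ : Sym2 V → V → ℤˣ)

/-- This is `-1` exactly when `d.snd = d'.fst` is an unbalanced vertex term. Reading the second
sign at `d'.fst` rather than at `d.snd` (the same vertex inside a walk) makes it invariant under
reversal, `transSign_symm_symm`. -/
def transSign (d d' : G.Dart) : ℤˣ := -(τ d.edge d.snd * τ d'.edge d'.fst)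

theorem transSign_symm_symm (d d' : G.Dart) :
    transSign τ d'.symm d.symm = transSign τ d d' := by
  simp [transSign, mul_comm]

theorem transSign_symm_mul_transSign (x y z : G.Dart) :
    transSign τ x y.symm * transSign τ y z = -transSign τ x z := by
  have key : ∀ a b c : ℤˣ, -(a * b) * -(b * c) = -(-(a * c)) := by decide
  simpa [transSign] using key (τ x.edge x.snd) (τ y.edge y.snd) (τ z.edge z.fst)

def reverseSigned (L : List (G.Dart × ℤˣ)) : List (G.Dart × ℤˣ) :=
  (L.map fun p => (p.1.symm, p.2)).reverse

@[simp] theorem map_fst_reverseSigned (L : List (G.Dart × ℤˣ)) :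
    (reverseSigned L).map Prod.fst = ((L.map Prod.fst).map Dart.symm).reverse := by
  simp [reverseSigned, Function.comp_def]

@[simp] theorem reverseSigned_append_singleton (L : List (G.Dart × ℤˣ)) (p : G.Dart × ℤˣ) :
    reverseSigned (L ++ [p]) = (p.1.symm, p.2) :: reverseSigned L := by
  simp [reverseSigned]

theorem reverseSigned_map_rescale (ε : ℤˣ) (L : List (G.Dart × ℤˣ)) :
    reverseSigned (L.map (rescale ε)) = (reverseSigned L).map (rescale ε) := by
  simp [reverseSigned, rescale, Function.comp_def]

variable {τ}

theorem isChain_reverseSigned {L : List (G.Dart × ℤˣ)}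
    (h : L.IsChain (SignStep (transSign τ))) :
    (reverseSigned L).IsChain (SignStep (transSign τ)) := by
  rw [reverseSigned, List.isChain_reverse, List.isChain_map]
  refine h.imp fun p q hpq => ?_
  simp only [SignStep, transSign_symm_symm] at hpq ⊢
  rw [hpq, ← mul_assoc, Int.units_mul_self, one_mul]

theorem ofFn_dartAt {u v : V} (w : G.Walk u v) : List.ofFn (dartAt w) = w.darts := by
  apply List.ext_get (by simp)
  intro i h₁ h₂
  simp [dartAt]

theorem isChain_dartAdj_darts_append_take_one {v : V} (c : G.Walk v v) :
    (c.darts ++ c.darts.take 1).IsChain G.DartAdj := by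
  cases c with
  | nil => simp
  | cons h p =>
    simpa using (Walk.cons h p |>.append (Walk.cons h .nil)).isChain_dartAdj_darts

def signedDarts {v : V} (c : G.Walk v v) (κ : Fin c.length → ℤˣ) : List (G.Dart × ℤˣ) :=
  List.ofFn fun i => (dartAt c i, κ i)

@[simp] theorem map_fst_signedDarts {v : V} (c : G.Walk v v) (κ : Fin c.length → ℤˣ) :
    (signedDarts c κ).map Prod.fst = c.darts := by
  simp [signedDarts, List.map_ofFn, Function.comp_def, ofFn_dartAt]

theorem FlipRel.isChain_signedDarts {v : V} {c : G.Walk v v} {κ : Fin c.length → ℤˣ}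
    (h : FlipRel G τ c κ) :
    (signedDarts c κ ++ (signedDarts c κ).take 1).IsChain (SignStep (transSign τ)) := by
  have hadj := isChain_dartAdj_darts_append_take_one c
  rw [← ofFn_dartAt, List.isChain_ofFn_append_take_one_iff] at hadj
  rw [signedDarts, List.isChain_ofFn_append_take_one_iff]
  intro i
  have hi : (dartAt c i).snd = (dartAt c (csucc i)).fst := hadj i
  rw [SignStep, transSign, ← hi]
  exact h i

theorem isChain_transSign_eq_one {l : List G.Dart} (hadj : l.IsChain G.DartAdj)
    (hbal : ∀ (i : ℕ) (h : i + 1 < l.length),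
      τ l[i].edge l[i].snd * τ l[i + 1].edge l[i].snd = -1) :
    l.IsChain fun d d' => transSign τ d d' = 1 := by
  rw [List.isChain_iff_getElem] at hadj ⊢
  intro i h
  have hi : l[i].snd = l[i + 1].fst := hadj i h
  rw [transSign, ← hi, hbal i h, neg_neg]

/-- When `D`, `E₁` and `E₂` are nonempty, the sign relation comes from the transitions at the
common endpoint of `E₁`, `E₂` and `D`, through `transSign_symm_mul_transSign`; otherwise one of
the four signs is free and is chosen to satisfy it. -/
theorem exists_compatible_signs_of_isChain {D E₁ E₂ : List G.Dart}
    {A A₁ B B₂ C₁ C₂ : List (G.Dart × ℤˣ)} (hD : D.IsChain fun d d' => transSign τ d d' = 1)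
    (hA : A.map Prod.fst = D) (hA₁ : A₁.map Prod.fst = E₁) (hB : B.map Prod.fst = D)
    (hB₂ : B₂.map Prod.fst = E₂) (hC₁ : C₁.map Prod.fst = E₁)
    (hC₂ : C₂.map Prod.fst = (E₂.map Dart.symm).reverse)
    (ha : (A₁ ++ A).IsChain (SignStep (transSign τ)))
    (hb : (B₂ ++ B).IsChain (SignStep (transSign τ)))
    (hc : (C₁ ++ C₂).IsChain (SignStep (transSign τ))) :
    ∃ α β ε₁ ε₂ : ℤˣ, A = withSign α D ∧ B = withSign β D ∧ C₁ = A₁.map (rescale ε₁) ∧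
      C₂ = (reverseSigned B₂).map (rescale ε₂) ∧ ε₂ * β = -(ε₁ * α) := by
  rw [List.isChain_append] at ha hb hc
  obtain ⟨α, rfl⟩ : ∃ α, A = withSign α D := by
    obtain ⟨α, hα⟩ :=
      exists_eq_map_rescale_of_isChain (isChain_withSign hD 1) ha.2.1 (by simp [hA])
    exact ⟨α, by simpa using hα⟩
  obtain ⟨β, rfl⟩ : ∃ β, B = withSign β D := by
    obtain ⟨β, hβ⟩ :=
      exists_eq_map_rescale_of_isChain (isChain_withSign hD 1) hb.2.1 (by simp [hB])
    exact ⟨β, by simpa using hβ⟩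
  obtain ⟨ε₁, rfl⟩ := exists_eq_map_rescale_of_isChain ha.1 hc.1 (by rw [hA₁, hC₁])
  obtain ⟨ε₂, rfl⟩ :=
    exists_eq_map_rescale_of_isChain (isChain_reverseSigned hb.1) hc.2.1 (by simp [hB₂, hC₂])
  rcases D with _ | ⟨d, D⟩
  · refine ⟨α, -(ε₂ * ε₁ * α), ε₁, ε₂, rfl, rfl, rfl, rfl, ?_⟩
    rw [mul_neg, ← mul_assoc, ← mul_assoc, Int.units_mul_self, one_mul]
  rcases A₁.eq_nil_or_concat with rfl | ⟨A₁, p, rfl⟩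
  · refine ⟨α, β, -(ε₂ * β * α), ε₂, rfl, rfl, rfl, rfl, ?_⟩
    rw [neg_mul, neg_neg, mul_assoc, Int.units_mul_self, mul_one]
  rcases B₂.eq_nil_or_concat with rfl | ⟨B₂, q, rfl⟩
  · refine ⟨α, β, ε₁, -(ε₁ * α * β), rfl, rfl, rfl, rfl, ?_⟩
    rw [neg_mul, mul_assoc, Int.units_mul_self, mul_one]
  refine ⟨α, β, ε₁, ε₂, rfl, rfl, rfl, rfl, ?_⟩
  have hpa : α = transSign τ p.1 d * p.2 := ha.2.2 p (by simp) (d, α) (by simp [withSign])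
  have hqb : β = transSign τ q.1 d * q.2 := hb.2.2 q (by simp) (d, β) (by simp [withSign])
  have hpq : ε₂ * q.2 = transSign τ p.1 q.1.symm * (ε₁ * p.2) :=
    hc.2.2 (rescale ε₁ p) (by simp) (rescale ε₂ (q.1.symm, q.2)) (by simp)
  calc ε₂ * β = transSign τ q.1 d * (ε₂ * q.2) := by rw [hqb, mul_left_comm]
    _ = transSign τ p.1 q.1.symm * transSign τ q.1 d * (ε₁ * p.2) := by
      rw [hpq, mul_left_comm, ← mul_assoc]
    _ = -(ε₁ * α) := by
      rw [transSign_symm_mul_transSign, hpa, neg_mul, mul_left_comm]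

end SignedDarts

section Monomials

open MvPolynomial

variable (R : Type*) [CommSemiring R] {G : SimpleGraph V}

noncomputable def signedMono (L : List (G.Dart × ℤˣ)) (s : ℤˣ) : MvPolynomial G.edgeSet R :=
  (L.map fun p => if p.2 = s then X ⟨p.1.edge, p.1.edge_mem⟩ else 1).prod

theorem signedMono_append (L L' : List (G.Dart × ℤˣ)) (s : ℤˣ) :
    signedMono R (L ++ L') s = signedMono R L s * signedMono R L' s := by
  simp [signedMono]

theorem signedMono_map_rescale (ε s : ℤˣ) (L : List (G.Dart × ℤˣ)) :
    signedMono R (L.map (rescale ε)) s = signedMono R L (ε * s) := by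
  have hiff : ∀ a : ℤˣ, ε * a = s ↔ a = ε * s := fun a => by
    rw [← eq_inv_mul_iff_mul_eq, Int.units_inv_eq_self]
  simp [signedMono, Function.comp_def, hiff]

theorem signedMono_reverseSigned (L : List (G.Dart × ℤˣ)) (s : ℤˣ) :
    signedMono R (reverseSigned L) s = signedMono R L s := by
  simp [signedMono, reverseSigned, Function.comp_def]

theorem signedMono_withSign (s s' : ℤˣ) (D : List G.Dart) :
    signedMono R (withSign s D) s' =
      if s = s' then (D.map fun d => X ⟨d.edge, d.edge_mem⟩).prod else 1 := by
  split_ifs with h <;> simp [signedMono, withSign, Function.comp_def, h]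

theorem signedMono_signedDarts {v : V} (c : G.Walk v v) (κ : Fin c.length → ℤˣ) (s : ℤˣ) :
    signedMono R (signedDarts c κ) s =
      ∏ i ∈ Finset.univ.filter (fun i => κ i = s),
        X ⟨(dartAt c i).edge, (dartAt c i).edge_mem⟩ := by
  rw [Finset.prod_filter, ← List.prod_ofFn]
  simp [signedMono, signedDarts, List.map_ofFn, Function.comp_def]

end Monomials

section Binomials

variable (R : Type*) [CommRing R] {G : SimpleGraph V}

noncomputable def signedBinomial (L : List (G.Dart × ℤˣ)) : MvPolynomial G.edgeSet R :=
  signedMono R L 1 - signedMono R L (-1)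

theorem Bpos_sub_Bneg (K : Type*) [Field K] {v : V} (c : G.Walk v v) (κ : Fin c.length → ℤˣ) :
    Bpos K c κ - Bneg K c κ = signedBinomial K (signedDarts c κ) := by
  rw [signedBinomial, signedMono_signedDarts, signedMono_signedDarts]
  rfl

theorem span_singleton_signedBinomial_map_rescale (ε : ℤˣ) (L : List (G.Dart × ℤˣ)) :
    Ideal.span {signedBinomial R (L.map (rescale ε))} = Ideal.span {signedBinomial R L} := by
  rcases Int.units_eq_one_or ε with rfl | rfl
  · simp
  · rw [← Ideal.span_singleton_neg (signedBinomial R L)]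
    simp [signedBinomial, signedMono_map_rescale]

theorem signedBinomial_map_rescale_mem_iff {I : Ideal (MvPolynomial G.edgeSet R)} (ε : ℤˣ)
    (L : List (G.Dart × ℤˣ)) :
    signedBinomial R (L.map (rescale ε)) ∈ I ↔ signedBinomial R L ∈ I := by
  rw [← Ideal.span_singleton_le_iff_mem, span_singleton_signedBinomial_map_rescale,
    Ideal.span_singleton_le_iff_mem]

theorem span_pair_signedBinomial_map_rescale (ε ε' : ℤˣ) (L L' : List (G.Dart × ℤˣ)) :
    Ideal.span {signedBinomial R (L.map (rescale ε)), signedBinomial R (L'.map (rescale ε'))} =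
      Ideal.span {signedBinomial R L, signedBinomial R L'} := by
  rw [Ideal.span_insert, Ideal.span_insert, span_singleton_signedBinomial_map_rescale,
    span_singleton_signedBinomial_map_rescale]

theorem signedBinomial_mem_span_withSign_one (D : List G.Dart) (L₁ L₂ : List (G.Dart × ℤˣ)) :
    signedBinomial R (L₁ ++ (reverseSigned L₂).map (rescale (-1))) ∈
      Ideal.span {signedBinomial R (withSign 1 D ++ L₁),
        signedBinomial R (withSign 1 D ++ L₂)} := by
  simp only [signedBinomial, signedMono_append, signedMono_map_rescale, signedMono_reverseSigned,
    signedMono_withSign, mul_one, mul_neg, neg_neg, if_true, if_neg (by decide : (1 : ℤˣ) ≠ -1),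
    one_mul]
  rw [Ideal.mem_span_pair]
  -- `P₁ N₂ - N₁ P₂ = P₂ (W P₁ - N₁) - P₁ (W P₂ - N₂)`
  exact ⟨signedMono R L₂ 1, -signedMono R L₁ 1, by ring⟩

theorem signedBinomial_append_reverseSigned_mem_span {D : List G.Dart}
    {A₁ B₂ : List (G.Dart × ℤˣ)} {α β ε₁ ε₂ : ℤˣ} (h : ε₂ * β = -(ε₁ * α)) :
    signedBinomial R (A₁.map (rescale ε₁) ++ (reverseSigned B₂).map (rescale ε₂)) ∈
      Ideal.span {signedBinomial R (withSign α D ++ A₁),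
        signedBinomial R (withSign β D ++ B₂)} := by
  have key := signedBinomial_mem_span_withSign_one R D (A₁.map (rescale α)) (B₂.map (rescale β))
  rw [← signedBinomial_map_rescale_mem_iff R (ε₁ * α),
    ← span_pair_signedBinomial_map_rescale R α β] at key
  obtain rfl : ε₂ = -(ε₁ * α) * β := by rw [← h, mul_assoc, Int.units_mul_self, mul_one]
  convert key using 3 <;> simp [reverseSigned_map_rescale, mul_assoc, Int.units_mul_self]

end Binomials

theorem binomial_in_span_of_balanced_mid_general (K : Type*) [Field K]
    (G : SimpleGraph V) (τ : Sym2 V → V → ℤˣ) (u v : V)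
    (w : G.Walk u v)
    -- w has no unbalanced (internal) vertex term:
    (hbal : ∀ (i : ℕ) (h1 : i + 1 < w.darts.length),
      τ (w.darts.get ⟨i, Nat.lt_of_succ_lt h1⟩).edge
          (w.darts.get ⟨i, Nat.lt_of_succ_lt h1⟩).toProd.2 *
        τ (w.darts.get ⟨i + 1, h1⟩).edge
          (w.darts.get ⟨i, Nat.lt_of_succ_lt h1⟩).toProd.2 = -1)
    (w₁ w₂ : G.Walk v u)
    (h1 : mu G τ (w.append w₁) = 1) (h2 : mu G τ (w.append w₂) = 1) :
    mu G τ (w₁.append w₂.reverse) = 1 ∧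
    ∀ (κa : Fin (w.append w₁).length → ℤˣ) (κb : Fin (w.append w₂).length → ℤˣ)
      (κc : Fin (w₁.append w₂.reverse).length → ℤˣ),
      FlipRel G τ (w.append w₁) κa → FlipRel G τ (w.append w₂) κb →
      FlipRel G τ (w₁.append w₂.reverse) κc →
      Bpos K (w₁.append w₂.reverse) κc - Bneg K (w₁.append w₂.reverse) κc ∈
        Ideal.span {Bpos K (w.append w₁) κa - Bneg K (w.append w₁) κa,
                    Bpos K (w.append w₂) κb - Bneg K (w.append w₂) κb} := by
  refine ⟨by rw [mu_append_reverse w, h1, h2, mul_one], fun κa κb κc ha hb hc => ?_⟩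
  obtain ⟨A, A₁, hSa, hA, hA₁⟩ := List.map_eq_append_iff.mp
    ((map_fst_signedDarts _ κa).trans (w.darts_append w₁))
  obtain ⟨B, B₂, hSb, hB, hB₂⟩ := List.map_eq_append_iff.mp
    ((map_fst_signedDarts _ κb).trans (w.darts_append w₂))
  obtain ⟨C₁, C₂, hSc, hC₁, hC₂⟩ := List.map_eq_append_iff.mp
    ((map_fst_signedDarts _ κc).trans (by rw [SimpleGraph.Walk.darts_append,
      SimpleGraph.Walk.darts_reverse]))
  obtain ⟨α, β, ε₁, ε₂, rfl, rfl, rfl, rfl, hsign⟩ := exists_compatible_signs_of_isChain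
    (isChain_transSign_eq_one w.isChain_dartAdj_darts hbal) hA hA₁ hB hB₂ hC₁ hC₂
    (hSa ▸ ha.isChain_signedDarts).append_comm_of_cyclic
    (hSb ▸ hb.isChain_signedDarts).append_comm_of_cyclic
    ((hSc ▸ hc.isChain_signedDarts).infix (List.prefix_append _ _).isInfix)
  rw [Bpos_sub_Bneg, Bpos_sub_Bneg, Bpos_sub_Bneg, hSa, hSb, hSc]
  exact signedBinomial_append_reverseSigned_mem_span K hsign

/-- Let w be a (u,v)-walk with no unbalanced (internal) vertex term,
and let w₁, w₂ be (v,u)-walks such that w + w₁ and w + w₂ are even closed walks.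
Then w₁ + w₂⁻¹ is an even closed walk and its associated binomial lies in the ideal
generated by B_{w+w₁} and B_{w+w₂} (each binomial being defined up to sign via a
section-parity assignment κ). -/
theorem binomial_in_span_of_balanced_mid [DecidableEq V] (K : Type*) [Field K]
    (G : SimpleGraph V) [Fintype G.edgeSet] (τ : Sym2 V → V → ℤˣ) (u v : V)
    (w : G.Walk u v)
    -- w has no unbalanced (internal) vertex term:
    (hbal : ∀ (i : ℕ) (h1 : i + 1 < w.darts.length),
      τ (w.darts.get ⟨i, Nat.lt_of_succ_lt h1⟩).edge
          (w.darts.get ⟨i, Nat.lt_of_succ_lt h1⟩).toProd.2 *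
        τ (w.darts.get ⟨i + 1, h1⟩).edge
          (w.darts.get ⟨i, Nat.lt_of_succ_lt h1⟩).toProd.2 = -1)
    (w₁ w₂ : G.Walk v u)
    (h1 : mu G τ (w.append w₁) = 1) (h2 : mu G τ (w.append w₂) = 1) :
    mu G τ (w₁.append w₂.reverse) = 1 ∧
    ∀ (κa : Fin (w.append w₁).length → ℤˣ) (κb : Fin (w.append w₂).length → ℤˣ)
      (κc : Fin (w₁.append w₂.reverse).length → ℤˣ),
      FlipRel G τ (w.append w₁) κa → FlipRel G τ (w.append w₂) κb →
      FlipRel G τ (w₁.append w₂.reverse) κc →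
      Bpos K (w₁.append w₂.reverse) κc - Bneg K (w₁.append w₂.reverse) κc ∈
        Ideal.span {Bpos K (w.append w₁) κa - Bneg K (w.append w₁) κa,
                    Bpos K (w.append w₂) κb - Bneg K (w.append w₂) κb} :=
  binomial_in_span_of_balanced_mid_general K G τ u v w hbal w₁ w₂ h1 h2
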